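/- Let T = {(x,y,z) ∈ [0,1]^3 : x ≤ y + z, y ≤ x + z, z ≤ x + y, x + y + z ≤ 2} be the closed tetrahedron with vertices (0,0,0), (0,1,1), (1,0,1), (1,1,0). Then for all x1, x2, x3, x4 ∈ [0,1], the one-dimensional Lebesgue measure of the set {y ∈ [0,1] : (x1,x2,y) ∈ T and (y,x3,x4) ∈ T} equals the one-dimensional Lebesgue measure of the set {y ∈ [0,1] : (x1,x3,y) ∈ T and (y,x2,x4) ∈ T}. -/

import Mathlib

/-!
For `x, y ∈ [0, 1]`, the points `z` with `(x, y, z) ∈ T` form the interval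
`[|x - y|, min (x + y) (2 - (x + y))]`, and `T` is invariant under cyclic permutation of the
coordinates, so both fibers are intervals. The length of the first one,
`min (tetraCap x1 x2) (tetraCap x3 x4) - max |x1 - x2| |x3 - x4|`, expands into a minimum of sixteen affine forms in
`x1, …, x4`, and swapping `x2` and `x3` only permutes these forms.
-/

open MeasureTheory

/-- Membership in the closed tetrahedron `T ⊆ [0,1]³` with vertices
`(0,0,0), (0,1,1), (1,0,1), (1,1,0)`. -/
def memTetra (x y z : ℝ) : Prop :=
  x ∈ Set.Icc (0:ℝ) 1 ∧ y ∈ Set.Icc (0:ℝ) 1 ∧ z ∈ Set.Icc (0:ℝ) 1 ∧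
    x ≤ y + z ∧ y ≤ x + z ∧ z ≤ x + y ∧ x + y + z ≤ 2

def tetraCap (x y : ℝ) : ℝ := min (x + y) (2 - (x + y))

lemma memTetra_rotate (x y z : ℝ) : memTetra z x y ↔ memTetra x y z := by
  unfold memTetra
  constructor <;> rintro ⟨hz, hx, hy, h₁, h₂, h₃, h₄⟩ <;>
    exact ⟨‹_›, ‹_›, ‹_›, by linarith, by linarith, by linarith, by linarith⟩

lemma memTetra_iff {x y : ℝ} (hx : x ∈ Set.Icc (0:ℝ) 1) (hy : y ∈ Set.Icc (0:ℝ) 1) (z : ℝ) :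
    memTetra x y z ↔ z ∈ Set.Icc |x - y| (tetraCap x y) := by
  obtain ⟨hx₀, hx₁⟩ := hx
  obtain ⟨hy₀, hy₁⟩ := hy
  simp only [memTetra, tetraCap, Set.mem_Icc, abs_sub_le_iff, le_min_iff]
  constructor
  · rintro ⟨-, -, -, h₁, h₂, h₃, h₄⟩
    exact ⟨⟨by linarith, by linarith⟩, h₃, by linarith⟩
  · rintro ⟨⟨h₁, h₂⟩, h₃, h₄⟩
    exact ⟨⟨hx₀, hx₁⟩, ⟨hy₀, hy₁⟩, ⟨by linarith, by linarith⟩,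
      by linarith, by linarith, h₃, by linarith⟩

lemma Icc_abs_sub_tetraCap_subset_unitInterval (x y : ℝ) :
    Set.Icc |x - y| (tetraCap x y) ⊆ Set.Icc 0 1 := fun z ⟨hlo, hhi⟩ =>
  ⟨(abs_nonneg _).trans hlo, by unfold tetraCap at hhi; grind⟩

lemma fiber_eq_Icc {a b c d : ℝ} (ha : a ∈ Set.Icc (0:ℝ) 1) (hb : b ∈ Set.Icc (0:ℝ) 1)
    (hc : c ∈ Set.Icc (0:ℝ) 1) (hd : d ∈ Set.Icc (0:ℝ) 1) :
    {y : ℝ | y ∈ Set.Icc (0:ℝ) 1 ∧ memTetra a b y ∧ memTetra y c d} =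
      Set.Icc (max |a - b| |c - d|) (min (tetraCap a b) (tetraCap c d)) := by
  have hab : Set.Icc |a - b| (tetraCap a b) ⊆ Set.Icc 0 1 :=
    Icc_abs_sub_tetraCap_subset_unitInterval a b
  calc {y : ℝ | y ∈ Set.Icc (0:ℝ) 1 ∧ memTetra a b y ∧ memTetra y c d}
      = Set.Icc 0 1 ∩ (Set.Icc |a - b| (tetraCap a b) ∩ Set.Icc |c - d| (tetraCap c d)) := by
        ext y
        simp only [Set.mem_ofPred_eq, Set.mem_inter_iff, memTetra_rotate, memTetra_iff ha hb,
          memTetra_iff hc hd]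
    _ = Set.Icc (max |a - b| |c - d|) (min (tetraCap a b) (tetraCap c d)) := by
        rw [Set.inter_eq_right.mpr (Set.inter_subset_left.trans hab), Set.Icc_inter_Icc]

def tetraFiberLength (a b c d : ℝ) : ℝ :=
  min (tetraCap a b) (tetraCap c d) - max |a - b| |c - d|

lemma tetraFiberLength_swap (a b c d : ℝ) :
    tetraFiberLength a b c d = tetraFiberLength a c b d := by
  simp only [tetraFiberLength, tetraCap, abs_eq_max_neg, ← min_sub_sub_left,
    ← min_sub_sub_right]
  ring_nf
  ac_rfl

/-- Section 1.5: the fibers of the two 5-dimensional polytopes `P1`, `P2` over a point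
`(x1,x2,x3,x4) ∈ [0,1]⁴` have the same one-dimensional Lebesgue measure. -/
theorem tetra_fiber_lengths_equal (x1 x2 x3 x4 : ℝ)
    (h1 : x1 ∈ Set.Icc (0:ℝ) 1) (h2 : x2 ∈ Set.Icc (0:ℝ) 1)
    (h3 : x3 ∈ Set.Icc (0:ℝ) 1) (h4 : x4 ∈ Set.Icc (0:ℝ) 1) :
    volume {y : ℝ | y ∈ Set.Icc (0:ℝ) 1 ∧ memTetra x1 x2 y ∧ memTetra y x3 x4} =
      volume {y : ℝ | y ∈ Set.Icc (0:ℝ) 1 ∧ memTetra x1 x3 y ∧ memTetra y x2 x4} := by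
  rw [fiber_eq_Icc h1 h2 h3 h4, fiber_eq_Icc h1 h3 h2 h4, Real.volume_Icc, Real.volume_Icc]
  exact congrArg ENNReal.ofReal (tetraFiberLength_swap x1 x2 x3 x4)
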